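/- arXiv:0912.5277 — 5 statements merged into one kernel-verified Lean document; each statement's English description precedes it below -/
import Mathlib

section
/- Let X be a Banach space, (Ω,𝓕,ℙ) and (S,𝒜,P) probability spaces, Ψ: Ω×X→ℝ a jointly measurable mapping, and {W^ε, ε>0} a family of X-valued random variables defined on (S,𝒜,P). Assume: (i) x ↦ Ψ(ω,x) is continuous in ℙ-probability (if x_n → x in X then Ψ(·,x_n) → Ψ(·,x) in ℙ-probability); (ii) for each x ∈ X, ω ↦ Ψ(ω,x) is 𝓕-measurable; (iii) for some δ>0 the family of S-random variables {s ↦ 𝔼|Ψ(·,W^ε(s))|^{1+δ}, ε>0} is a.s. finite and tight. If W^ε converges in distribution to an X-valued random variable W, then the S-random variable s ↦ 𝔼 Ψ(·,W^ε(s)) converges in distribution to 𝔼 Ψ(·,W), as ε→0. -/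
/-!
Write `F x = ∫ Ψ(ω, x) dQ`, `G x = ∫ |Ψ(ω, x)|^(1+δ) dQ`, and let `F_R` be `F` with `Ψ`
truncated at `±R`. Continuity in probability makes `F_R` continuous (dominated convergence along
a.s. convergent subsequences) and `G` lower semicontinuous (Fatou). Hence `F_R(W^ε) → F_R(W)` in
law by the continuous mapping theorem, and the portmanteau theorem (`{G > M}` is open) carries
the tightness bound `P(G(W^ε) > M) ≤ η` over to `W`. Since `|F - F_R| ≤ G / R^δ`, for
`R^δ = M / α` the variables `F(W^ε)` and `F(W)` are within `α` of `F_R(W^ε)` and `F_R(W)` outside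
events of probability at most `α`, uniformly in `ε`. So their laws are `α`-close in
Lévy–Prokhorov distance, and `α → 0` gives the claim.
-/

open MeasureTheory Filter Topology Metric TopologicalSpace
open scoped ENNReal

noncomputable def truncAt (R t : ℝ) : ℝ := max (-R) (min t R)

lemma continuous_truncAt (R : ℝ) : Continuous (truncAt R) := by
  unfold truncAt; fun_prop

lemma abs_truncAt_le {R : ℝ} (hR : 0 ≤ R) (t : ℝ) : |truncAt R t| ≤ R := by
  unfold truncAt; grind

lemma abs_sub_truncAt_le_abs {R : ℝ} (hR : 0 ≤ R) (t : ℝ) : |t - truncAt R t| ≤ |t| := by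
  unfold truncAt; grind

lemma abs_sub_truncAt_le {R δ : ℝ} (hR : 0 < R) (hδ : 0 < δ) (t : ℝ) :
    |t - truncAt R t| ≤ |t| ^ (1 + δ) / R ^ δ := by
  rcases le_or_gt |t| R with ht | ht
  · have : truncAt R t = t := by unfold truncAt; grind
    rw [this, sub_self, abs_zero]
    positivity
  · have ht0 : 0 < |t| := hR.trans ht
    calc |t - truncAt R t| ≤ |t| := abs_sub_truncAt_le_abs hR.le t
      _ ≤ |t| * (|t| ^ δ / R ^ δ) := by
          refine le_mul_of_one_le_right ht0.le ?_
          rw [one_le_div (by positivity)]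
          exact Real.rpow_le_rpow hR.le ht.le hδ.le
      _ = |t| ^ (1 + δ) / R ^ δ := by
          rw [Real.rpow_add ht0, Real.rpow_one, mul_div_assoc]

lemma abs_integral_sub_integral_truncAt_le {Ω : Type*} [MeasurableSpace Ω] {Q : Measure Ω}
    [IsFiniteMeasure Q] {f : Ω → ℝ} (hf : AEMeasurable f Q) {R δ M : ℝ} (hR : 0 < R)
    (hδ : 0 < δ) (hM : 0 ≤ M)
    (hfM : ∫⁻ ω, ENNReal.ofReal (|f ω| ^ (1 + δ)) ∂Q ≤ ENNReal.ofReal M) :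
    |∫ ω, f ω ∂Q - ∫ ω, truncAt R (f ω) ∂Q| ≤ M / R ^ δ := by
  have htrunc_meas : AEMeasurable (fun ω => truncAt R (f ω)) Q :=
    (continuous_truncAt R).measurable.comp_aemeasurable hf
  have hmom : Integrable (fun ω => |f ω| ^ (1 + δ)) Q :=
    ⟨(hf.abs.pow_const _).aestronglyMeasurable,
      (hasFiniteIntegral_iff_ofReal (ae_of_all _ fun ω => by positivity)).2
        (hfM.trans_lt ENNReal.ofReal_lt_top)⟩
  have htrunc : Integrable (fun ω => truncAt R (f ω)) Q :=
    Integrable.of_bound htrunc_meas.aestronglyMeasurable R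
      (ae_of_all _ fun ω => abs_truncAt_le hR.le _)
  have herr : Integrable (fun ω => f ω - truncAt R (f ω)) Q :=
    (hmom.div_const (R ^ δ)).mono' (hf.sub htrunc_meas).aestronglyMeasurable
      (ae_of_all _ fun ω => abs_sub_truncAt_le hR hδ _)
  have hf_int : Integrable f Q :=
    (herr.add htrunc).congr (ae_of_all _ fun ω => sub_add_cancel _ _)
  have hmomM : ∫ ω, |f ω| ^ (1 + δ) ∂Q ≤ M := by
    rw [integral_eq_lintegral_of_nonneg_ae (ae_of_all _ fun ω => by positivity) hmom.1]
    exact ENNReal.toReal_le_of_le_ofReal hM hfM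
  calc |∫ ω, f ω ∂Q - ∫ ω, truncAt R (f ω) ∂Q| = |∫ ω, f ω - truncAt R (f ω) ∂Q| := by
        rw [integral_sub hf_int htrunc]
    _ ≤ ∫ ω, |f ω - truncAt R (f ω)| ∂Q := abs_integral_le_integral_abs
    _ ≤ ∫ ω, |f ω| ^ (1 + δ) / R ^ δ ∂Q :=
        integral_mono herr.abs (hmom.div_const _) fun ω => abs_sub_truncAt_le hR hδ _
    _ = (∫ ω, |f ω| ^ (1 + δ) ∂Q) / R ^ δ := integral_div _ _
    _ ≤ M / R ^ δ := by gcongr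

namespace MeasureTheory

section ContinuityInProbability

variable {Ω X : Type*} [MeasurableSpace Ω] {Q : Measure Ω} [TopologicalSpace X]
  [SequentialSpace X] {Ψ : Ω → X → ℝ}
  (hmeas : ∀ x, AEMeasurable (fun ω => Ψ ω x) Q)
  (hcont : ∀ (x : ℕ → X) (x₀ : X), Tendsto x atTop (𝓝 x₀) →
    TendstoInMeasure Q (fun n ω => Ψ ω (x n)) atTop (fun ω => Ψ ω x₀))
include hmeas hcont

theorem lowerSemicontinuous_lintegral_comp_of_tendstoInMeasure {φ : ℝ → ℝ≥0∞}
    (hφ : Continuous φ) : LowerSemicontinuous fun x => ∫⁻ ω, φ (Ψ ω x) ∂Q := by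
  refine lowerSemicontinuous_iff_isClosed_preimage.2 fun c => IsSeqClosed.isClosed ?_
  intro x x₀ hxc hx
  obtain ⟨ns, -, hae⟩ := (hcont x x₀ hx).exists_seq_tendsto_ae
  calc ∫⁻ ω, φ (Ψ ω x₀) ∂Q = ∫⁻ ω, liminf (fun n => φ (Ψ ω (x (ns n)))) atTop ∂Q :=
        lintegral_congr_ae (hae.mono fun ω hω => ((hφ.tendsto _).comp hω).liminf_eq.symm)
    _ ≤ liminf (fun n => ∫⁻ ω, φ (Ψ ω (x (ns n))) ∂Q) atTop :=
        lintegral_liminf_le' fun n => hφ.measurable.comp_aemeasurable (hmeas _)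
    _ ≤ c := liminf_le_of_frequently_le' (Frequently.of_forall fun n => hxc (ns n))

theorem continuous_integral_comp_of_tendstoInMeasure [IsFiniteMeasure Q] {g : ℝ → ℝ}
    (hg : Continuous g) {C : ℝ} (hgC : ∀ t, |g t| ≤ C) :
    Continuous fun x => ∫ ω, g (Ψ ω x) ∂Q := by
  refine SeqContinuous.continuous fun x x₀ hx => tendsto_of_subseq_tendsto fun ns hns => ?_
  obtain ⟨ms, -, hae⟩ := (hcont (x ∘ ns) x₀ (hx.comp hns)).exists_seq_tendsto_ae
  refine ⟨ms, tendsto_integral_of_dominated_convergence (fun _ => C)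
    (fun n => (hg.measurable.comp_aemeasurable (hmeas _)).aestronglyMeasurable)
    (integrable_const C) (fun n => ae_of_all _ fun ω => hgC _) ?_⟩
  filter_upwards [hae] with ω hω using (hg.tendsto _).comp hω

end ContinuityInProbability

section LevyProkhorov

variable {S E : Type*} [MeasurableSpace S] {P : Measure S}
  [PseudoMetricSpace E] [MeasurableSpace E] [OpensMeasurableSpace E]

lemma map_apply_le_map_apply_thickening_add {Y Y' : S → E} (hY : AEMeasurable Y P)
    (hY' : AEMeasurable Y' P) {α : ℝ} {ε : ℝ≥0∞} (hαε : α < ε.toReal)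
    (h : P {s | α < dist (Y s) (Y' s)} ≤ ε) {B : Set E} (hB : MeasurableSet B) :
    P.map Y B ≤ P.map Y' (thickening ε.toReal B) + ε := by
  rw [Measure.map_apply_of_aemeasurable hY hB,
    Measure.map_apply_of_aemeasurable hY' isOpen_thickening.measurableSet]
  have hsub : Y ⁻¹' B ⊆ Y' ⁻¹' thickening ε.toReal B ∪ {s | α < dist (Y s) (Y' s)} := by
    intro s hs
    by_cases hfar : α < dist (Y s) (Y' s)
    · exact Or.inr hfar
    · exact Or.inl (mem_thickening_iff.2 ⟨Y s, hs, by rw [dist_comm]; linarith⟩)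
  calc P (Y ⁻¹' B) ≤ P (Y' ⁻¹' thickening ε.toReal B) + P {s | α < dist (Y s) (Y' s)} :=
        (measure_mono hsub).trans (measure_union_le _ _)
    _ ≤ P (Y' ⁻¹' thickening ε.toReal B) + ε := by gcongr

lemma levyProkhorovEDist_map_le {Y Y' : S → E} (hY : AEMeasurable Y P)
    (hY' : AEMeasurable Y' P) {α : ℝ} (h : P {s | α < dist (Y s) (Y' s)} ≤ ENNReal.ofReal α) :
    levyProkhorovEDist (P.map Y) (P.map Y') ≤ ENNReal.ofReal α := by
  refine levyProkhorovEDist_le_of_forall _ _ _ fun ε B hε hεtop hB => ?_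
  have hαε : α < ε.toReal := by
    rcases le_or_gt α 0 with hα | hα
    · exact hα.trans_lt (ENNReal.toReal_pos (pos_of_gt hε).ne' hεtop.ne)
    · rwa [← ENNReal.ofReal_lt_iff_lt_toReal hα.le hεtop.ne]
  have h' : P {s | α < dist (Y' s) (Y s)} ≤ ε := by
    simpa only [dist_comm] using h.trans hε.le
  exact ⟨map_apply_le_map_apply_thickening_add hY hY' hαε (h.trans hε.le) hB,
    map_apply_le_map_apply_thickening_add hY' hY hαε h' hB⟩

/-- Billingsley's approximation theorem (*Convergence of Probability Measures*, Thm. 3.2), with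
the approximation error controlled in probability, uniformly in `i`. -/
theorem tendstoInDistribution_of_forall_approx [SeparableSpace E] [IsProbabilityMeasure P]
    {ι : Type*} {l : Filter ι} {Y : ι → S → E} {Y₀ : S → E}
    (hY : ∀ i, AEMeasurable (Y i) P) (hY₀ : AEMeasurable Y₀ P)
    (happrox : ∀ α > 0, ∃ (Z : ι → S → E) (Z₀ : S → E),
      TendstoInDistribution Z l Z₀ (fun _ => P) P ∧
      (∀ᶠ i in l, P {s | α < dist (Y i s) (Z i s)} ≤ ENNReal.ofReal α) ∧
      P {s | α < dist (Z₀ s) (Y₀ s)} ≤ ENNReal.ofReal α) :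
    TendstoInDistribution Y l Y₀ (fun _ => P) P := by
  let H := LevyProkhorov.probabilityMeasureHomeomorph (Ω := E)
  let law (U : S → E) (hU : AEMeasurable U P) : LevyProkhorov (ProbabilityMeasure E) :=
    H ⟨P.map U, Measure.isProbabilityMeasure_map hU⟩
  have hdist {U V : S → E} (hU : AEMeasurable U P) (hV : AEMeasurable V P) {α : ℝ} (hα : 0 ≤ α)
      (h : P {s | α < dist (U s) (V s)} ≤ ENNReal.ofReal α) : dist (law U hU) (law V hV) ≤ α :=
    ENNReal.toReal_le_of_le_ofReal hα (levyProkhorovEDist_map_le hU hV h)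
  refine ⟨hY, hY₀, H.isInducing.tendsto_nhds_iff.2 (Metric.tendsto_nhds.2 fun θ hθ => ?_)⟩
  obtain ⟨Z, Z₀, hZ, hYZ, hZY₀⟩ := happrox (θ / 4) (by positivity)
  have hZ' : ∀ᶠ i in l,
      dist (law (Z i) (hZ.forall_aemeasurable i)) (law Z₀ hZ.aemeasurable_limit) < θ / 4 :=
    Metric.tendsto_nhds.1 (H.isInducing.tendsto_nhds_iff.1 hZ.tendsto) (θ / 4) (by positivity)
  show ∀ᶠ i in l, dist (law (Y i) (hY i)) (law Y₀ hY₀) < θ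
  filter_upwards [hYZ, hZ'] with i hYZi hZi
  linarith [dist_triangle4 (law (Y i) (hY i)) (law (Z i) (hZ.forall_aemeasurable i))
    (law Z₀ hZ.aemeasurable_limit) (law Y₀ hY₀),
    hdist (hY i) (hZ.forall_aemeasurable i) (by positivity) hYZi,
    hdist hZ.aemeasurable_limit hY₀ (by positivity) hZY₀]

end LevyProkhorov

section RandomVariables

variable {ι S E : Type*} {l : Filter ι} [MeasurableSpace S] {P : Measure S}
  [IsProbabilityMeasure P] [TopologicalSpace E] [MeasurableSpace E] [OpensMeasurableSpace E]
  {Y : ι → S → E} {Y₀ : S → E}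

lemma tendstoInDistribution_iff_forall_integral_tendsto (hY : ∀ i, AEMeasurable (Y i) P)
    (hY₀ : AEMeasurable Y₀ P) :
    TendstoInDistribution Y l Y₀ (fun _ => P) P ↔ ∀ f : BoundedContinuousFunction E ℝ,
      Tendsto (fun i => ∫ s, f (Y i s) ∂P) l (𝓝 (∫ s, f (Y₀ s) ∂P)) := by
  refine ⟨fun h f => ?_, fun h => ⟨hY, hY₀, ?_⟩⟩
  · have := ProbabilityMeasure.tendsto_iff_forall_integral_tendsto.1 h.tendsto f
    simp only [ProbabilityMeasure.coe_mk] at this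
    rw [integral_map hY₀ f.continuous.aestronglyMeasurable] at this
    exact this.congr fun i => integral_map (hY i) f.continuous.aestronglyMeasurable
  · refine ProbabilityMeasure.tendsto_iff_forall_integral_tendsto.2 fun f => ?_
    simp only [ProbabilityMeasure.coe_mk]
    rw [integral_map hY₀ f.continuous.aestronglyMeasurable]
    exact (h f).congr fun i => (integral_map (hY i) f.continuous.aestronglyMeasurable).symm

lemma TendstoInDistribution.measure_preimage_le [HasOuterApproxClosed E] [l.NeBot]
    (h : TendstoInDistribution Y l Y₀ (fun _ => P) P) {U : Set E} (hU : IsOpen U) {c : ℝ≥0∞}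
    (hc : ∀ᶠ i in l, P (Y i ⁻¹' U) ≤ c) : P (Y₀ ⁻¹' U) ≤ c := by
  have := ProbabilityMeasure.le_liminf_measure_open_of_tendsto h.tendsto hU
  simp only [ProbabilityMeasure.coe_mk] at this
  rw [Measure.map_apply_of_aemeasurable h.aemeasurable_limit hU.measurableSet] at this
  refine this.trans (liminf_le_of_frequently_le' (hc.mono fun i hi => ?_).frequently)
  rwa [Measure.map_apply_of_aemeasurable (h.forall_aemeasurable i) hU.measurableSet]

end RandomVariables

theorem TendstoInDistribution.integral_comp {ι S Ω X : Type*} {l : Filter ι} [l.NeBot]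
    [MeasurableSpace S] [MeasurableSpace Ω] {P : Measure S} [IsProbabilityMeasure P]
    {Q : Measure Ω} [IsFiniteMeasure Q]
    [TopologicalSpace X] [PseudoMetrizableSpace X] [MeasurableSpace X] [OpensMeasurableSpace X]
    {Ψ : Ω → X → ℝ} (hΨ : Measurable (Function.uncurry Ψ))
    (hcont : ∀ (x : ℕ → X) (x₀ : X), Tendsto x atTop (𝓝 x₀) →
      TendstoInMeasure Q (fun n ω => Ψ ω (x n)) atTop (fun ω => Ψ ω x₀))
    {δ : ℝ} (hδ : 0 < δ) {W : ι → S → X} {W₀ : S → X}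
    (hW : TendstoInDistribution W l W₀ (fun _ => P) P)
    (hfin : ∀ i, ∀ᵐ s ∂P, Integrable (fun ω => |Ψ ω (W i s)| ^ (1 + δ)) Q)
    (htight : ∀ η > 0, ∃ M, 0 < M ∧ ∀ i,
      P {s | M < ∫ ω, |Ψ ω (W i s)| ^ (1 + δ) ∂Q} ≤ ENNReal.ofReal η) :
    TendstoInDistribution (fun i s => ∫ ω, Ψ ω (W i s) ∂Q) l (fun s => ∫ ω, Ψ ω (W₀ s) ∂Q)
      (fun _ => P) P := by
  set G : X → ℝ≥0∞ := fun x => ∫⁻ ω, ENNReal.ofReal (|Ψ ω x| ^ (1 + δ)) ∂Q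
  set F : X → ℝ := fun x => ∫ ω, Ψ ω x ∂Q
  have hmeas : ∀ x, AEMeasurable (fun ω => Ψ ω x) Q :=
    fun x => (hΨ.comp measurable_prodMk_right).aemeasurable
  have hF : Measurable F :=
    (hΨ.comp measurable_swap).stronglyMeasurable.integral_prod_right'.measurable
  have hG : LowerSemicontinuous G :=
    lowerSemicontinuous_lintegral_comp_of_tendstoInMeasure hmeas hcont
      (ENNReal.continuous_ofReal.comp (continuous_abs.rpow_const fun _ => Or.inr (by linarith)))
  have hGW : ∀ M i, P {s | ENNReal.ofReal M < G (W i s)} ≤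
      P {s | M < ∫ ω, |Ψ ω (W i s)| ^ (1 + δ) ∂Q} := fun M i =>
    measure_mono_ae <| (hfin i).mono fun s hs
        (hMs : ENNReal.ofReal M < ∫⁻ ω, ENNReal.ofReal (|Ψ ω (W i s)| ^ (1 + δ)) ∂Q) => by
      rw [← ofReal_integral_eq_lintegral_ofReal hs (ae_of_all _ fun ω => by positivity)] at hMs
      exact (ENNReal.ofReal_lt_ofReal_iff'.1 hMs).1
  refine tendstoInDistribution_of_forall_approx
    (fun i => hF.comp_aemeasurable (hW.forall_aemeasurable i))
    (hF.comp_aemeasurable hW.aemeasurable_limit) fun α hα => ?_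
  obtain ⟨M, hM, hMW⟩ := htight α hα
  have hMW₀ : P (W₀ ⁻¹' {x | ENNReal.ofReal M < G x}) ≤ ENNReal.ofReal α :=
    hW.measure_preimage_le (hG.isOpen_preimage _)
      (Eventually.of_forall fun i => (hGW M i).trans (hMW i))
  set R := (M / α) ^ δ⁻¹
  have hRδ : R ^ δ = M / α := by
    rw [← Real.rpow_mul (by positivity), inv_mul_cancel₀ hδ.ne', Real.rpow_one]
  set FR : X → ℝ := fun x => ∫ ω, truncAt R (Ψ ω x) ∂Q
  have hbad : ∀ x, α < dist (F x) (FR x) → ENNReal.ofReal M < G x := by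
    intro x hx
    by_contra! hGx
    have := abs_integral_sub_integral_truncAt_le (R := R) (hmeas x) (by positivity) hδ hM.le hGx
    rw [hRδ, div_div_cancel₀ hM.ne'] at this
    rw [Real.dist_eq] at hx
    linarith
  refine ⟨fun i => FR ∘ W i, FR ∘ W₀,
    hW.continuous_comp (continuous_integral_comp_of_tendstoInMeasure hmeas hcont
      (continuous_truncAt R) (abs_truncAt_le (by positivity))),
    Eventually.of_forall fun i =>
      ((measure_mono fun s hs => hbad _ hs).trans (hGW M i)).trans (hMW i),
    (measure_mono fun s hs => hbad _ (by rwa [dist_comm])).trans hMW₀⟩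

end MeasureTheory

theorem stmt1_general {X : Type*} [NormedAddCommGroup X]
    [MeasurableSpace X] [BorelSpace X]
    {Ω S : Type*} [MeasurableSpace Ω] [MeasurableSpace S]
    (Q : Measure Ω) [IsProbabilityMeasure Q] (P : Measure S) [IsProbabilityMeasure P]
    (Ψ : Ω → X → ℝ)
    (hΨjm : Measurable (Function.uncurry Ψ))
    -- (i) continuity in Q-probability
    (hcont : ∀ (x : ℕ → X) (x₀ : X), Tendsto x atTop (𝓝 x₀) →
      TendstoInMeasure Q (fun n ω => Ψ ω (x n)) atTop (fun ω => Ψ ω x₀))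
    (W : ℝ → S → X) (W₀ : S → X)
    (hWmeas : ∀ ε, 0 < ε → Measurable (W ε)) (hW₀meas : Measurable W₀)
    (δ : ℝ) (hδ : 0 < δ)
    -- (iii) a.s. finiteness and tightness of the (1+δ)-moments
    (hfin : ∀ ε, 0 < ε → ∀ᵐ s ∂P, Integrable (fun ω => |Ψ ω (W ε s)| ^ (1 + δ)) Q)
    (htight : ∀ η, 0 < η → ∃ M, 0 < M ∧ ∀ ε, 0 < ε →
      P {s | M < ∫ ω, |Ψ ω (W ε s)| ^ (1 + δ) ∂Q} ≤ ENNReal.ofReal η)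
    -- W^ε → W in distribution on X
    (hconv : ∀ f : BoundedContinuousFunction X ℝ,
      Tendsto (fun ε => ∫ s, f (W ε s) ∂P) (𝓝[>] (0:ℝ)) (𝓝 (∫ s, f (W₀ s) ∂P))) :
    ∀ f : BoundedContinuousFunction ℝ ℝ,
      Tendsto (fun ε => ∫ s, f (∫ ω, Ψ ω (W ε s) ∂Q) ∂P) (𝓝[>] (0:ℝ))
        (𝓝 (∫ s, f (∫ ω, Ψ ω (W₀ s) ∂Q) ∂P)) := by
  intro f
  have hrange : Set.range ((↑) : Set.Ioi (0:ℝ) → ℝ) ∈ 𝓝[>] (0:ℝ) := by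
    rw [Subtype.range_coe]; exact self_mem_nhdsWithin
  have : (comap ((↑) : Set.Ioi (0:ℝ) → ℝ) (𝓝[>] 0)).NeBot :=
    NeBot.comap_of_range_mem inferInstance hrange
  have hW : TendstoInDistribution (fun ε : Set.Ioi (0:ℝ) => W ε)
      (comap ((↑) : Set.Ioi (0:ℝ) → ℝ) (𝓝[>] 0)) W₀ (fun _ => P) P :=
    (tendstoInDistribution_iff_forall_integral_tendsto
      (fun ε : Set.Ioi (0:ℝ) => (hWmeas ε ε.2).aemeasurable)
      hW₀meas.aemeasurable).2 fun g => (hconv g).comp tendsto_comap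
  have hlim := hW.integral_comp hΨjm hcont hδ (fun ε => hfin ε ε.2) fun η hη =>
    let ⟨M, hM, hMW⟩ := htight η hη
    ⟨M, hM, fun ε => hMW ε ε.2⟩
  have h := (tendstoInDistribution_iff_forall_integral_tendsto hlim.forall_aemeasurable
    hlim.aemeasurable_limit).1 hlim f
  rw [← map_comap_of_mem hrange]
  exact tendsto_map'_iff.2 h

/-- Corollary: convergence in law of partial expectations.
Let `X` be a Banach space, `(Ω,𝓕,Q)` and `(S,𝒜,P)` probability spaces,
`Ψ : Ω × X → ℝ` jointly measurable, and `{W^ε}` a family of `X`-valued random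
variables on `S`.  Assume:
(i) `x ↦ Ψ(ω,x)` is continuous in `Q`-probability;
(ii) for each `x ∈ X`, `ω ↦ Ψ(ω,x)` is measurable;
(iii) for some `δ > 0`, the family `{s ↦ E_Q |Ψ(·, W^ε(s))|^{1+δ}}` is a.s. finite and tight.
If `W^ε → W` in distribution then `s ↦ E_Q Ψ(·, W^ε(s))` converges in distribution to
`E_Q Ψ(·, W)` as `ε → 0⁺`. -/
theorem stmt1 {X : Type*} [NormedAddCommGroup X] [NormedSpace ℝ X] [CompleteSpace X]
    [MeasurableSpace X] [BorelSpace X]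
    {Ω S : Type*} [MeasurableSpace Ω] [MeasurableSpace S]
    (Q : Measure Ω) [IsProbabilityMeasure Q] (P : Measure S) [IsProbabilityMeasure P]
    (Ψ : Ω → X → ℝ)
    (hΨjm : Measurable (Function.uncurry Ψ))
    -- (i) continuity in Q-probability
    (hcont : ∀ (x : ℕ → X) (x₀ : X), Tendsto x atTop (𝓝 x₀) →
      TendstoInMeasure Q (fun n ω => Ψ ω (x n)) atTop (fun ω => Ψ ω x₀))
    -- (ii) measurability in ω for each fixed x
    (hmeasω : ∀ x : X, Measurable fun ω => Ψ ω x)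
    (W : ℝ → S → X) (W₀ : S → X)
    (hWmeas : ∀ ε, 0 < ε → Measurable (W ε)) (hW₀meas : Measurable W₀)
    (δ : ℝ) (hδ : 0 < δ)
    -- (iii) a.s. finiteness and tightness of the (1+δ)-moments
    (hfin : ∀ ε, 0 < ε → ∀ᵐ s ∂P, Integrable (fun ω => |Ψ ω (W ε s)| ^ (1 + δ)) Q)
    (htight : ∀ η, 0 < η → ∃ M, 0 < M ∧ ∀ ε, 0 < ε →
      P {s | M < ∫ ω, |Ψ ω (W ε s)| ^ (1 + δ) ∂Q} ≤ ENNReal.ofReal η)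
    -- W^ε → W in distribution on X
    (hconv : ∀ f : BoundedContinuousFunction X ℝ,
      Tendsto (fun ε => ∫ s, f (W ε s) ∂P) (𝓝[>] (0:ℝ)) (𝓝 (∫ s, f (W₀ s) ∂P))) :
    ∀ f : BoundedContinuousFunction ℝ ℝ,
      Tendsto (fun ε => ∫ s, f (∫ ω, Ψ ω (W ε s) ∂Q) ∂P) (𝓝[>] (0:ℝ))
        (𝓝 (∫ s, f (∫ ω, Ψ ω (W₀ s) ∂Q) ∂P)) :=
  stmt1_general Q P Ψ hΨjm hcont W W₀ hWmeas hW₀meas δ hδ hfin htight hconv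
end

section
/- If Z is a standard Gaussian N(0,1) random variable, c>0 and 0<p<2, then E[exp(c|Z|^p)] ≤ √2 · exp( ((2−p)/2) · (4c)^{2/(2−p)} ). -/
/-!
Young's inequality with exponents `2/p` and `2/(2-p)` gives the pointwise bound
`c |x|^p ≤ x²/4 + ((2-p)/2) (4c)^{2/(2-p)}`; exponentiating and integrating leaves the
Gaussian integral `E[exp(Z²/4)] = 1/√(1 - 1/2) = √2`.
-/

open MeasureTheory ProbabilityTheory Real
open scoped NNReal

lemma rpow_mul_le_of_lt_two {a b p : ℝ} (ha : 0 ≤ a) (hb : 0 ≤ b) (hp0 : 0 < p) (hp2 : p < 2) :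
    a ^ p * b ≤ p / 2 * a ^ 2 + (2 - p) / 2 * b ^ (2 / (2 - p)) := by
  have hq : 0 < 2 - p := by linarith
  have amgm := geom_mean_le_arith_mean2_weighted (w₁ := p / 2) (w₂ := (2 - p) / 2)
    (by positivity) (by positivity) (sq_nonneg a) (rpow_nonneg hb (2 / (2 - p))) (by ring)
  rwa [← rpow_two, ← rpow_mul ha, ← rpow_mul hb, mul_div_cancel₀ _ two_ne_zero,
    div_mul_div_cancel₀ hq.ne', div_self two_ne_zero, rpow_one, rpow_two] at amgm

lemma mul_abs_rpow_le_sq_div_four_add {c p : ℝ} (hc : 0 ≤ c) (hp0 : 0 < p) (hp2 : p < 2) (x : ℝ) :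
    c * |x| ^ p ≤ x ^ 2 / 4 + (2 - p) / 2 * (4 * c) ^ (2 / (2 - p)) := by
  have two_rpow_le : (2 : ℝ) ^ p ≤ 4 :=
    (rpow_le_rpow_of_exponent_le one_le_two hp2.le).trans_eq (by norm_num)
  calc c * |x| ^ p = (|x| / 2) ^ p * (2 ^ p * c) := by
        rw [div_rpow (abs_nonneg x) zero_le_two]
        field_simp
    _ ≤ p / 2 * (|x| / 2) ^ 2 + (2 - p) / 2 * (2 ^ p * c) ^ (2 / (2 - p)) :=
        rpow_mul_le_of_lt_two (by positivity) (by positivity) hp0 hp2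
    _ ≤ 1 * (|x| / 2) ^ 2 + (2 - p) / 2 * (4 * c) ^ (2 / (2 - p)) := by
        gcongr
        linarith
    _ = x ^ 2 / 4 + (2 - p) / 2 * (4 * c) ^ (2 / (2 - p)) := by
        rw [div_pow, sq_abs]
        ring

lemma gaussianPDFReal_zero_mul_exp_mul_sq (v : ℝ≥0) (t x : ℝ) :
    gaussianPDFReal 0 v x * exp (t * x ^ 2)
      = (√(2 * π * v))⁻¹ * exp (-((2 * (v : ℝ))⁻¹ - t) * x ^ 2) := by
  rw [gaussianPDFReal, mul_assoc, ← exp_add]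
  congr 2
  ring

lemma integrable_exp_mul_sq_gaussianReal {v : ℝ≥0} {t : ℝ} (ht : t * v < 1 / 2) :
    Integrable (fun x ↦ exp (t * x ^ 2)) (gaussianReal 0 v) := by
  rcases eq_or_ne v 0 with rfl | hv
  · simpa [gaussianReal_zero_var] using integrable_dirac (by simp)
  have decay : 0 < (2 * (v : ℝ))⁻¹ - t := by
    rw [sub_pos, ← mul_one (2 * (v : ℝ))⁻¹, lt_inv_mul_iff₀ (by positivity)]
    linarith
  rw [gaussianReal_of_var_ne_zero 0 hv, integrable_withDensity_iff_integrable_smul'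
    (measurable_gaussianPDF 0 v) (ae_of_all _ fun _ ↦ gaussianPDF_lt_top)]
  simp_rw [toReal_gaussianPDF, smul_eq_mul, gaussianPDFReal_zero_mul_exp_mul_sq]
  exact (integrable_exp_neg_mul_sq decay).const_mul _

-- For `2 t v ≥ 1` both sides are junk zeros: the integrand is not integrable and `√` of a
-- nonpositive number is `0`.
lemma integral_exp_mul_sq_gaussianReal (v : ℝ≥0) (t : ℝ) :
    ∫ x, exp (t * x ^ 2) ∂gaussianReal 0 v = (√(1 - 2 * t * v))⁻¹ := by
  rcases eq_or_ne v 0 with rfl | hv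
  · simp [gaussianReal_zero_var]
  simp_rw [integral_gaussianReal_eq_integral_smul hv, smul_eq_mul,
    gaussianPDFReal_zero_mul_exp_mul_sq, integral_const_mul, integral_gaussian]
  rw [← sqrt_inv, ← sqrt_mul (by positivity), ← sqrt_inv]
  congr 1
  field_simp

theorem stmt6_general {Ω : Type*} [MeasurableSpace Ω] (μ : Measure Ω)
    (Z : Ω → ℝ) (hZ : Measure.map Z μ = gaussianReal 0 1)
    (c p : ℝ) (hc : 0 < c) (hp0 : 0 < p) (hp2 : p < 2) :
    ∫ ω, Real.exp (c * |Z ω| ^ p) ∂μ ≤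
      Real.sqrt 2 * Real.exp ((2 - p) / 2 * (4 * c) ^ (2 / (2 - p))) := by
  set K := (2 - p) / 2 * (4 * c) ^ (2 / (2 - p))
  have hZm : AEMeasurable Z μ := aemeasurable_of_map_neZero (by rw [hZ]; infer_instance)
  have integrable_bound : Integrable (fun x ↦ exp (x ^ 2 / 4 + K)) (gaussianReal 0 1) := by
    simp_rw [exp_add, div_eq_inv_mul]
    exact (integrable_exp_mul_sq_gaussianReal (by norm_num)).mul_const _
  calc ∫ ω, exp (c * |Z ω| ^ p) ∂μ = ∫ x, exp (c * |x| ^ p) ∂gaussianReal 0 1 := by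
        rw [← hZ, integral_map hZm
          (by fun_prop : Measurable fun x : ℝ ↦ exp (c * |x| ^ p)).aestronglyMeasurable]
    _ ≤ ∫ x, exp (x ^ 2 / 4 + K) ∂gaussianReal 0 1 :=
        integral_mono_of_nonneg (ae_of_all _ fun _ ↦ (exp_pos _).le) integrable_bound
          (ae_of_all _ fun x ↦ exp_le_exp.2 (mul_abs_rpow_le_sq_div_four_add hc.le hp0 hp2 x))
    _ = √2 * exp K := by
        simp_rw [exp_add, div_eq_inv_mul, integral_mul_const,
          integral_exp_mul_sq_gaussianReal]
        norm_num

/-- If `Z` is a standard Gaussian `N(0,1)` random variable, `c > 0`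
and `0 < p < 2`, then `E[exp(c |Z|^p)] ≤ √2 · exp(((2−p)/2) · (4c)^{2/(2−p)})`. -/
theorem stmt6 {Ω : Type*} [MeasurableSpace Ω] (μ : Measure Ω) [IsProbabilityMeasure μ]
    (Z : Ω → ℝ) (hZ : Measure.map Z μ = gaussianReal 0 1)
    (c p : ℝ) (hc : 0 < c) (hp0 : 0 < p) (hp2 : p < 2) :
    ∫ ω, Real.exp (c * |Z ω| ^ p) ∂μ ≤
      Real.sqrt 2 * Real.exp ((2 - p) / 2 * (4 * c) ^ (2 / (2 - p))) :=
  stmt6_general μ Z hZ c p hc hp0 hp2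
end

section
/- Let K>0 and let {X_ε, ε>0} be a family of real random variables with |X_ε| ≤ K a.s. for all ε, E X_ε = 0 for all ε, and E exp(X_ε) → 1 as ε→0. Then X_ε → 0 in probability as ε→0. -/
/-!
With `φ x = exp x - 1 - x`, the hypotheses give `E φ(X_ε) = E exp(X_ε) - 1 → 0`, while `φ ≥ 0`
and, by convexity, `φ x ≥ δ := min (φ η) (φ (-η)) > 0` whenever `|x| ≥ η`. Markov's inequality
then bounds `P(|X_ε| ≥ η)` by `E φ(X_ε) / δ`.
-/

open MeasureTheory Filter Topology Real

section ExpSubOneSub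

/-- `exp x - 1 - x` lies above its tangent line at `a`. -/
lemma exp_sub_one_sub_add_mul_le (a x : ℝ) :
    exp a - 1 - a + (exp a - 1) * (x - a) ≤ exp x - 1 - x := by
  have htangent : exp a * (x - a + 1) ≤ exp x := by
    rw [show x = a + (x - a) by ring, exp_add, add_sub_cancel_left]
    exact mul_le_mul_of_nonneg_left (add_one_le_exp _) (exp_pos a).le
  linarith

lemma exp_sub_one_sub_le_of_nonneg_of_le {a x : ℝ} (ha : 0 ≤ a) (hax : a ≤ x) :
    exp a - 1 - a ≤ exp x - 1 - x := by
  have : 0 ≤ (exp a - 1) * (x - a) :=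
    mul_nonneg (sub_nonneg.mpr (one_le_exp ha)) (sub_nonneg.mpr hax)
  linarith [exp_sub_one_sub_add_mul_le a x]

lemma exp_sub_one_sub_le_of_nonpos_of_le {a x : ℝ} (ha : a ≤ 0) (hxa : x ≤ a) :
    exp a - 1 - a ≤ exp x - 1 - x := by
  have : 0 ≤ (exp a - 1) * (x - a) :=
    mul_nonneg_of_nonpos_of_nonpos (sub_nonpos.mpr (exp_le_one_iff.mpr ha)) (sub_nonpos.mpr hxa)
  linarith [exp_sub_one_sub_add_mul_le a x]

lemma min_exp_sub_one_sub_le_of_le_abs {η x : ℝ} (hη : 0 ≤ η) (hx : η ≤ |x|) :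
    min (exp η - 1 - η) (exp (-η) - 1 - -η) ≤ exp x - 1 - x := by
  rcases le_abs.mp hx with h | h
  · exact (min_le_left _ _).trans (exp_sub_one_sub_le_of_nonneg_of_le hη h)
  · exact (min_le_right _ _).trans
      (exp_sub_one_sub_le_of_nonpos_of_le (neg_nonpos.mpr hη) (le_neg_of_le_neg h))

lemma exp_sub_one_sub_nonneg (x : ℝ) : 0 ≤ exp x - 1 - x := by
  linarith [add_one_le_exp x]

lemma exp_sub_one_sub_pos {x : ℝ} (hx : x ≠ 0) : 0 < exp x - 1 - x := by
  linarith [add_one_lt_exp hx]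

end ExpSubOneSub

section Markov

variable {Ω ι : Type*} [MeasurableSpace Ω] {μ : Measure Ω}

theorem tendsto_measure_setOf_le_of_tendsto_integral {l : Filter ι} {f : ι → Ω → ℝ}
    (hf_nonneg : ∀ᶠ i in l, 0 ≤ᵐ[μ] f i) (hf_int : ∀ᶠ i in l, Integrable (f i) μ)
    (hf : Tendsto (fun i => ∫ ω, f i ω ∂μ) l (𝓝 0)) {δ : ℝ} (hδ : 0 < δ) :
    Tendsto (fun i => μ {ω | δ ≤ f i ω}) l (𝓝 0) := by
  have hmarkov : ∀ᶠ i in l,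
      μ {ω | δ ≤ f i ω} ≤ ENNReal.ofReal (∫ ω, f i ω ∂μ) / ENNReal.ofReal δ := by
    filter_upwards [hf_nonneg, hf_int] with i hnonneg hint
    rw [ofReal_integral_eq_lintegral_ofReal hint hnonneg]
    calc μ {ω | δ ≤ f i ω} ≤ μ {ω | ENNReal.ofReal δ ≤ ENNReal.ofReal (f i ω)} :=
          measure_mono fun ω hω => ENNReal.ofReal_le_ofReal hω
      _ ≤ _ := meas_ge_le_lintegral_div hint.aemeasurable.ennreal_ofReal
          (ENNReal.ofReal_pos.mpr hδ).ne' ENNReal.ofReal_ne_top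
  have hbound : Tendsto (fun i => ENNReal.ofReal (∫ ω, f i ω ∂μ) / ENNReal.ofReal δ) l (𝓝 0) := by
    simpa using ENNReal.Tendsto.div_const (ENNReal.tendsto_ofReal hf) (Or.inr (ENNReal.ofReal_pos.mpr hδ).ne')
  exact tendsto_of_tendsto_of_tendsto_of_le_of_le' tendsto_const_nhds hbound
    (Eventually.of_forall fun _ => zero_le) hmarkov

end Markov

section BoundedRandomVariable

variable {Ω : Type*} [MeasurableSpace Ω] {P : Measure Ω} [IsProbabilityMeasure P]
  {X : Ω → ℝ} {K : ℝ}

lemma integrable_exp_of_abs_le (hX : AEStronglyMeasurable X P) (hbdd : ∀ᵐ ω ∂P, |X ω| ≤ K) :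
    Integrable (fun ω => exp (X ω)) P := by
  refine .of_bound (continuous_exp.comp_aestronglyMeasurable hX) (exp K) ?_
  filter_upwards [hbdd] with ω hω
  rw [norm_of_nonneg (exp_pos _).le]
  exact exp_le_exp.mpr ((le_abs_self _).trans hω)

lemma integrable_exp_sub_one_sub_of_abs_le (hX : AEStronglyMeasurable X P)
    (hbdd : ∀ᵐ ω ∂P, |X ω| ≤ K) : Integrable (fun ω => exp (X ω) - 1 - X ω) P :=
  ((integrable_exp_of_abs_le hX hbdd).sub (integrable_const 1)).sub (.of_bound hX K hbdd)

lemma integral_exp_sub_one_sub_of_integral_eq_zero (hX : AEStronglyMeasurable X P)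
    (hbdd : ∀ᵐ ω ∂P, |X ω| ≤ K) (hmean : ∫ ω, X ω ∂P = 0) :
    ∫ ω, exp (X ω) - 1 - X ω ∂P = ∫ ω, exp (X ω) ∂P - 1 := by
  have hexpint := integrable_exp_of_abs_le hX hbdd
  rw [integral_sub (f := fun ω => exp (X ω) - 1) (hexpint.sub (integrable_const 1))
    (.of_bound hX K hbdd), integral_sub hexpint (integrable_const 1), hmean]
  simp

end BoundedRandomVariable

theorem stmt17_general {Ω : Type*} [MeasurableSpace Ω] (P : Measure Ω) [IsProbabilityMeasure P]
    (K : ℝ) (X : ℝ → Ω → ℝ)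
    (hmeas : ∀ ε, 0 < ε → Measurable (X ε))
    (hbdd : ∀ ε, 0 < ε → ∀ᵐ ω ∂P, |X ε ω| ≤ K)
    (hmean : ∀ ε, 0 < ε → ∫ ω, X ε ω ∂P = 0)
    (hexp : Tendsto (fun ε => ∫ ω, Real.exp (X ε ω) ∂P) (𝓝[>] (0:ℝ)) (𝓝 1)) :
    ∀ η, 0 < η →
      Tendsto (fun ε => P {ω | η ≤ |X ε ω|}) (𝓝[>] (0:ℝ)) (𝓝 0) := by
  intro η hη
  have hpos : ∀ᶠ ε in 𝓝[>] (0:ℝ), 0 < ε := self_mem_nhdsWithin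
  have hδ : 0 < min (exp η - 1 - η) (exp (-η) - 1 - -η) :=
    lt_min (exp_sub_one_sub_pos hη.ne') (exp_sub_one_sub_pos (neg_ne_zero.mpr hη.ne'))
  have hφ : Tendsto (fun ε => ∫ ω, exp (X ε ω) - 1 - X ε ω ∂P) (𝓝[>] (0:ℝ)) (𝓝 0) := by
    refine (tendsto_congr' ?_).mpr (by simpa using hexp.sub_const 1)
    filter_upwards [hpos] with ε hε
    exact integral_exp_sub_one_sub_of_integral_eq_zero (hmeas ε hε).aestronglyMeasurable
      (hbdd ε hε) (hmean ε hε)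
  refine tendsto_of_tendsto_of_tendsto_of_le_of_le tendsto_const_nhds
    (tendsto_measure_setOf_le_of_tendsto_integral ?_ ?_ hφ hδ) (fun _ => zero_le)
    fun ε => measure_mono fun ω hω => min_exp_sub_one_sub_le_of_le_abs hη.le hω
  · exact .of_forall fun ε => .of_forall fun ω => exp_sub_one_sub_nonneg (X ε ω)
  · filter_upwards [hpos] with ε hε
    exact integrable_exp_sub_one_sub_of_abs_le (hmeas ε hε).aestronglyMeasurable (hbdd ε hε)

/-- Let `K > 0` and `{X_ε, ε > 0}` be real random variables with
`|X_ε| ≤ K` a.s., `E X_ε = 0`, and `E exp(X_ε) → 1` as `ε → 0⁺`.  Then `X_ε → 0`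
in probability as `ε → 0⁺`. -/
theorem stmt17 {Ω : Type*} [MeasurableSpace Ω] (P : Measure Ω) [IsProbabilityMeasure P]
    (K : ℝ) (hK : 0 < K) (X : ℝ → Ω → ℝ)
    (hmeas : ∀ ε, 0 < ε → Measurable (X ε))
    (hbdd : ∀ ε, 0 < ε → ∀ᵐ ω ∂P, |X ε ω| ≤ K)
    (hmean : ∀ ε, 0 < ε → ∫ ω, X ε ω ∂P = 0)
    (hexp : Tendsto (fun ε => ∫ ω, Real.exp (X ε ω) ∂P) (𝓝[>] (0:ℝ)) (𝓝 1)) :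
    ∀ η, 0 < η →
      Tendsto (fun ε => P {ω | η ≤ |X ε ω|}) (𝓝[>] (0:ℝ)) (𝓝 0) :=
  stmt17_general P K X hmeas hbdd hmean hexp
end

section
/- Let ρ, σ : ℝ→ℝ be continuously differentiable functions with compact support. Then for all y, y' ∈ ℝ: ∫_ℝ ∫_ℝ 1_{{z·z'>0}} (|z|∧|z'|) ρ'(y−z) σ'(y'−z') dz dz' = ∫_ℝ ρ(y−z) σ(y'−z) dz. -/
/-!
With `τ t = -σ (y' - t)`, the inner integral over `z'` is `ρ'(y - z) ∫₀^z σ (y' - t) dt`: for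
`z > 0` split `(0, ∞)` at `z`, integrate `z' τ'(z')` by parts on `(0, z]` and integrate `z τ'` on
`(z, ∞)` directly; the case `z < 0` is its mirror image under `x ↦ -x`. A second integration by
parts on the whole line, against `t ↦ -ρ (y - t)`, moves the derivative onto the primitive
`z ↦ ∫₀^z σ (y' - t) dt` and gives `∫ ρ (y - z) σ (y' - z) dz`.
-/
open MeasureTheory Set

variable {f : ℝ → ℝ}

theorem integral_deriv_mul_intervalIntegral (hf : ContDiff ℝ 1 f) (hfc : HasCompactSupport f)
    {g : ℝ → ℝ} (hg : Continuous g) :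
    ∫ x, deriv f x * ∫ t in 0..x, g t = -∫ x, f x * g x := by
  set G := fun x => ∫ t in 0..x, g t
  have hGd : ∀ x, HasDerivAt G (g x) x := fun x => (hg.integral_hasStrictDerivAt 0 x).hasDerivAt
  have hG : Continuous G := continuous_iff_continuousAt.2 fun x => (hGd x).continuousAt
  have hf' : Continuous (deriv f) := hf.continuous_deriv le_rfl
  have ibp := integral_mul_deriv_eq_deriv_mul_of_integrable (fun x _ => hGd x)
    (fun x _ => (hf.differentiable one_ne_zero x).hasDerivAt)
    ((hG.mul hf').integrable_of_hasCompactSupport hfc.deriv.mul_left)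
    ((hg.mul hf.continuous).integrable_of_hasCompactSupport hfc.mul_left)
    ((hG.mul hf.continuous).integrable_of_hasCompactSupport hfc.mul_left)
  simpa only [mul_comm] using ibp

theorem setIntegral_Ioi_zero_min_mul_deriv (hf : ContDiff ℝ 1 f) (hfc : HasCompactSupport f)
    {z : ℝ} (hz : 0 ≤ z) :
    ∫ x in Ioi 0, min z x * deriv f x = -∫ t in 0..z, f t := by
  have hf' : Continuous (deriv f) := hf.continuous_deriv le_rfl
  have hint : Integrable fun x => min z x * deriv f x :=
    ((continuous_const.min continuous_id).mul hf').integrable_of_hasCompactSupport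
      hfc.deriv.mul_left
  have hIoc : ∫ x in Ioc 0 z, min z x * deriv f x = z * f z - ∫ t in 0..z, f t := by
    rw [← intervalIntegral.integral_of_le hz]
    calc ∫ x in 0..z, min z x * deriv f x = ∫ x in 0..z, x * deriv f x :=
          intervalIntegral.integral_congr fun x hx => by
            rw [uIcc_of_le hz] at hx; rw [min_eq_right hx.2]
      _ = z * f z - ∫ t in 0..z, f t := by
          rw [intervalIntegral.integral_mul_deriv_eq_deriv_mul (u := fun x => x)
            (fun x _ => hasDerivAt_id' x)
            (fun x _ => (hf.differentiable one_ne_zero x).hasDerivAt)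
            intervalIntegrable_const (hf'.intervalIntegrable 0 z)]
          simp
  have hIoi : ∫ x in Ioi z, min z x * deriv f x = -(z * f z) := by
    rw [setIntegral_congr_fun measurableSet_Ioi fun x (hx : z < x) => by rw [min_eq_left hx.le],
      integral_const_mul, hfc.integral_Ioi_deriv_eq hf, mul_neg]
  rw [← Ioc_union_Ioi_eq_Ioi hz, setIntegral_union (Ioc_disjoint_Ioi le_rfl) measurableSet_Ioi
    hint.integrableOn hint.integrableOn, hIoc, hIoi]
  ring

theorem integral_ite_mul_pos_min_abs_mul_deriv_of_nonneg (hf : ContDiff ℝ 1 f)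
    (hfc : HasCompactSupport f) {z : ℝ} (hz : 0 ≤ z) :
    ∫ x, (if 0 < z * x then min |z| |x| * deriv f x else 0) = -∫ t in 0..z, f t := by
  have hind : (fun x => if 0 < z * x then min |z| |x| * deriv f x else 0) =
      (Ioi 0).indicator fun x => min z x * deriv f x := by
    ext x
    by_cases hx : x ∈ Ioi 0
    · rw [indicator_of_mem hx, abs_of_nonneg hz, abs_of_pos hx]
      rcases hz.eq_or_lt with rfl | hz
      · simp [(mem_Ioi.1 hx).le]
      · simp [mul_pos hz hx]
    · rw [indicator_of_notMem hx,
        if_neg (not_lt.2 (mul_nonpos_of_nonneg_of_nonpos hz (not_lt.1 hx)))]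
  rw [hind, integral_indicator measurableSet_Ioi, setIntegral_Ioi_zero_min_mul_deriv hf hfc hz]

theorem integral_ite_mul_pos_min_abs_mul_deriv (hf : ContDiff ℝ 1 f)
    (hfc : HasCompactSupport f) (z : ℝ) :
    ∫ x, (if 0 < z * x then min |z| |x| * deriv f x else 0) = -∫ t in 0..z, f t := by
  rcases le_total 0 z with hz | hz
  · exact integral_ite_mul_pos_min_abs_mul_deriv_of_nonneg hf hfc hz
  set g := fun x => f (-x)
  have hg : ContDiff ℝ 1 g := hf.comp contDiff_neg
  have hgc : HasCompactSupport g := hfc.comp_homeomorph (Homeomorph.neg ℝ)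
  have key := integral_ite_mul_pos_min_abs_mul_deriv_of_nonneg hg hgc (neg_nonneg.2 hz)
  have hgd : ∀ x, deriv g x = -deriv f (-x) := deriv_comp_neg f
  have hgi : ∫ t in 0..-z, g t = -∫ t in 0..z, f t := by
    rw [intervalIntegral.integral_comp_neg, neg_neg, neg_zero, intervalIntegral.integral_symm]
  rw [← integral_neg_eq_self, ← neg_neg (∫ t in 0..z, f t), ← hgi, ← key, ← integral_neg]
  congr 1 with x
  simp only [hgd, abs_neg, neg_mul, mul_neg]
  split_ifs <;> simp

/-- For `ρ, σ : ℝ → ℝ` continuously differentiable with compact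
support and any `y, y' ∈ ℝ`,
`∫∫ 1_{z z' > 0} (|z| ∧ |z'|) ρ'(y−z) σ'(y'−z') dz dz' = ∫ ρ(y−z) σ(y'−z) dz`. -/
theorem stmt18 (ρ σ : ℝ → ℝ) (hρ : ContDiff ℝ 1 ρ) (hσ : ContDiff ℝ 1 σ)
    (hρc : HasCompactSupport ρ) (hσc : HasCompactSupport σ) (y y' : ℝ) :
    ∫ z : ℝ, ∫ z' : ℝ,
        (if 0 < z * z' then (min |z| |z'|) * deriv ρ (y - z) * deriv σ (y' - z') else 0)
      = ∫ z : ℝ, ρ (y - z) * σ (y' - z) := by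
  set ψ := fun t => -ρ (y - t)
  set τ := fun t => -σ (y' - t)
  have hψ : ContDiff ℝ 1 ψ := (hρ.comp (contDiff_const.sub contDiff_id)).neg
  have hτ : ContDiff ℝ 1 τ := (hσ.comp (contDiff_const.sub contDiff_id)).neg
  have hψc : HasCompactSupport ψ := (hρc.comp_homeomorph (Homeomorph.subLeft y)).neg
  have hτc : HasCompactSupport τ := (hσc.comp_homeomorph (Homeomorph.subLeft y')).neg
  have hψd : ∀ z, deriv ψ z = deriv ρ (y - z) := by simp [ψ, deriv_comp_const_sub]
  have hτd : ∀ z, deriv τ z = deriv σ (y' - z) := by simp [τ, deriv_comp_const_sub]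
  have inner (z : ℝ) : ∫ z', (if 0 < z * z' then min |z| |z'| * deriv ρ (y - z) *
      deriv σ (y' - z') else 0) = deriv ψ z * ∫ t in 0..z, σ (y' - t) := by
    rw [← neg_neg (∫ t in 0..z, σ (y' - t)), ← intervalIntegral.integral_neg,
      ← integral_ite_mul_pos_min_abs_mul_deriv hτ hτc z, ← integral_const_mul]
    congr 1 with z'
    split_ifs <;> simp only [hψd, hτd, mul_zero]
    ring
  simp_rw [inner]
  rw [integral_deriv_mul_intervalIntegral hψ hψc (by fun_prop), ← integral_neg]
  simp [ψ]
end

section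
/- There exists a constant C>0 such that for all T>0 and r>0, the 6-dimensional Lebesgue measure of the set S(r) = { (t₁,…,t₆) ∈ [0,T]⁶ : max_{1≤i≤6} min_{j≠i} |t_i − t_j| ≤ r } satisfies Vol(S(r)) ≤ C r³ T³. -/
/-!
Sort the coordinates as `s₀ ≤ … ≤ s₅`. The nearest other point of `s₀` lies to its right, so
`s₁ - s₀ ≤ r`; symmetrically `s₅ - s₄ ≤ r`; and the nearest other point of `s₃` gives
`s₃ - s₂ ≤ r` or `s₄ - s₃ ≤ r`. Either way three of the coordinates lie within `r` of one of the
three others. For each of the finitely many such configurations, Fubini bounds the volume by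
`(2r)³ T³`: the three partner coordinates range over `[0, T]³`, and each remaining coordinate over
an interval of length `2r` around its partner.
-/

open MeasureTheory Finset Set

variable {ι : Type*}

def IsPartnerMap (r : ℝ) (t : ι → ℝ) (A : Finset ι) (w : ι → ι) : Prop :=
  ∀ i ∈ A, w i ∉ A ∧ |t i - t (w i)| ≤ r

lemma IsPartnerMap.of_comp {r : ℝ} {t : ι → ℝ} {A : Finset ι} {w : ι → ι} (σ : Equiv.Perm ι)
    (h : IsPartnerMap r (t ∘ σ) A w) :
    IsPartnerMap r t (A.map σ.toEmbedding) (σ ∘ w ∘ σ.symm) := by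
  simp only [IsPartnerMap, Finset.forall_mem_map]
  intro a ha
  simpa using h a ha

lemma exists_isPartnerMap_of_monotone {r : ℝ} {s : Fin 6 → ℝ} (hs : Monotone s)
    (h : ∀ i, ∃ j ≠ i, |s i - s j| ≤ r) :
    ∃ A : Finset (Fin 6), #A = 3 ∧ ∃ w, IsPartnerMap r s A w := by
  have m : s 0 ≤ s 1 ∧ s 1 ≤ s 2 ∧ s 2 ≤ s 3 ∧ s 3 ≤ s 4 ∧ s 4 ≤ s 5 :=
    ⟨hs (by decide), hs (by decide), hs (by decide), hs (by decide), hs (by decide)⟩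
  have near (i : Fin 6) : ∃ j ≠ i, s j - r ≤ s i ∧ s i ≤ s j + r := by
    obtain ⟨j, hj, hr⟩ := h i
    exact ⟨j, hj, by linarith [abs_le.1 hr], by linarith [abs_le.1 hr]⟩
  have gap01 : s 1 - s 0 ≤ r := by
    obtain ⟨j, hj, hr⟩ := near 0
    fin_cases j <;> simp at hj hr <;> linarith
  have gap45 : s 5 - s 4 ≤ r := by
    obtain ⟨j, hj, hr⟩ := near 5
    fin_cases j <;> simp at hj hr <;> linarith
  have gap23_or_gap34 : s 3 - s 2 ≤ r ∨ s 4 - s 3 ≤ r := by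
    obtain ⟨j, hj, hr⟩ := near 3
    fin_cases j <;> simp at hj hr
    all_goals first | (left; linarith) | (right; linarith)
  rcases gap23_or_gap34 with gap | gap
  · refine ⟨{1, 3, 5}, rfl, ![0, 0, 2, 2, 4, 4], ?_⟩
    simp only [IsPartnerMap, Finset.mem_insert, Finset.mem_singleton, forall_eq_or_imp, forall_eq]
    refine ⟨⟨by decide, ?_⟩, ⟨by decide, ?_⟩, ⟨by decide, ?_⟩⟩ <;> simp <;> rw [abs_le] <;>
      constructor <;> linarith
  · refine ⟨{0, 3, 5}, rfl, ![1, 1, 1, 4, 4, 4], ?_⟩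
    simp only [IsPartnerMap, Finset.mem_insert, Finset.mem_singleton, forall_eq_or_imp, forall_eq]
    refine ⟨⟨by decide, ?_⟩, ⟨by decide, ?_⟩, ⟨by decide, ?_⟩⟩ <;> simp <;> rw [abs_le] <;>
      constructor <;> linarith

lemma exists_isPartnerMap {r : ℝ} {t : Fin 6 → ℝ} (h : ∀ i, ∃ j ≠ i, |t i - t j| ≤ r) :
    ∃ A : Finset (Fin 6), #A = 3 ∧ ∃ w, IsPartnerMap r t A w := by
  set σ := Tuple.sort t
  have hσ : ∀ i, ∃ j ≠ i, |(t ∘ σ) i - (t ∘ σ) j| ≤ r := fun i => by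
    obtain ⟨j, hj, hr⟩ := h (σ i)
    exact ⟨σ.symm j, by simpa [Equiv.symm_apply_eq] using hj, by simpa using hr⟩
  obtain ⟨A, hA, w, hw⟩ := exists_isPartnerMap_of_monotone (Tuple.monotone_sort t) hσ
  exact ⟨A.map σ.toEmbedding, by simpa using hA, _, hw.of_comp σ⟩

variable [Fintype ι]

def partnerSet (T r : ℝ) (A : Finset ι) (w : ι → ι) : Set (ι → ℝ) :=
  {t | (∀ i ∉ A, t i ∈ Icc 0 T) ∧ ∀ i ∈ A, |t i - t (w i)| ≤ r}

lemma measurableSet_partnerSet (T r : ℝ) (A : Finset ι) (w : ι → ι) :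
    MeasurableSet (partnerSet T r A w) := by
  simp only [partnerSet, Set.ofPred_and, Set.ofPred_forall]
  measurability

lemma volume_partnerSet_le [DecidableEq ι] (T r : ℝ) {A : Finset ι} {w : ι → ι}
    (hw : ∀ i ∈ A, w i ∉ A) :
    volume (partnerSet T r A w) ≤ ENNReal.ofReal (2 * r) ^ #A * ENNReal.ofReal T ^ #Aᶜ := by
  let e := MeasurableEquiv.piEquivPiSubtypeProd (fun _ : ι => ℝ) (· ∈ A)
  let X : Set ({i // i ∉ A} → ℝ) := univ.pi fun _ => Icc 0 T
  have slice_le (x : {i // i ∉ A} → ℝ) :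
      volume ((fun y => (y, x)) ⁻¹' (e.symm ⁻¹' partnerSet T r A w)) ≤
        X.indicator (fun _ => ENNReal.ofReal (2 * r) ^ #A) x := by
    by_cases hx : x ∈ X
    · rw [indicator_of_mem hx]
      calc _ ≤ volume (univ.pi fun j : A =>
              Icc (x ⟨w j, hw j j.2⟩ - r) (x ⟨w j, hw j j.2⟩ + r)) := by
            refine measure_mono fun y hy j _ => ?_
            have hj := hy.2 j j.2
            simp only [e, MeasurableEquiv.piEquivPiSubtypeProd_symm_apply, dif_pos j.2,
              dif_neg (hw j j.2)] at hj
            constructor <;> linarith [abs_le.1 hj]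
        _ = ENNReal.ofReal (2 * r) ^ #A := by
            rw [volume_pi, Measure.pi_pi]
            simp [Real.volume_Icc, two_mul]
    · rw [indicator_of_notMem hx, nonpos_iff_eq_zero, measure_eq_zero_iff_ae_notMem]
      refine .of_forall fun y hy => hx fun j _ => ?_
      simpa [e, j.2] using hy.1 j j.2
  have hX : volume X = ENNReal.ofReal T ^ #Aᶜ := by
    rw [volume_pi, Measure.pi_pi]
    simp [Real.volume_Icc, card_compl]
  calc volume (partnerSet T r A w)
      = volume (e.symm ⁻¹' partnerSet T r A w) := by
        -- `convert` reconciles the two `Fintype` instances on `↥A` (subtype and finset coercion)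
        convert
          (((volume_preserving_piEquivPiSubtypeProd _ _).symm e).measure_preimage_equiv _).symm
    _ = ∫⁻ x, volume ((fun y => (y, x)) ⁻¹' (e.symm ⁻¹' partnerSet T r A w)) :=
        Measure.prod_apply_symm (e.symm.measurable (measurableSet_partnerSet T r A w))
    _ ≤ ∫⁻ x, X.indicator (fun _ => ENNReal.ofReal (2 * r) ^ #A) x := lintegral_mono slice_le
    _ = _ := by rw [lintegral_indicator_const (.univ_pi fun _ => measurableSet_Icc), hX]

lemma subset_iUnion_partnerSet (T r : ℝ) :
    {t : Fin 6 → ℝ | (∀ i, t i ∈ Icc 0 T) ∧ ∀ i, ∃ j ≠ i, |t i - t j| ≤ r} ⊆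
      ⋃ p : {p : Finset (Fin 6) × (Fin 6 → Fin 6) // #p.1 = 3 ∧ ∀ i ∈ p.1, p.2 i ∉ p.1},
        partnerSet T r p.1.1 p.1.2 := by
  rintro t ⟨ht, hnear⟩
  obtain ⟨A, hA, w, hw⟩ := exists_isPartnerMap hnear
  exact Set.mem_iUnion.2 ⟨⟨(A, w), hA, fun i hi => (hw i hi).1⟩,
    fun i _ => ht i, fun i hi => (hw i hi).2⟩

/-- There is a constant `C > 0` such that for all `T > 0`, `r > 0`,
the Lebesgue measure (in `ℝ⁶`) of
`S(r) = {(t₁,…,t₆) ∈ [0,T]⁶ : max_i min_{j ≠ i} |t_i − t_j| ≤ r}`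
(the set of 6-tuples in which every coordinate lies within `r` of another coordinate)
is at most `C r³ T³`. -/
theorem stmt19 : ∃ C : ℝ, 0 < C ∧ ∀ T : ℝ, 0 < T → ∀ r : ℝ, 0 < r →
    volume {t : Fin 6 → ℝ | (∀ i, t i ∈ Set.Icc (0:ℝ) T) ∧
      ∀ i, ∃ j, j ≠ i ∧ |t i - t j| ≤ r}
      ≤ ENNReal.ofReal (C * r ^ 3 * T ^ 3) := by
  let K := Fintype.card (Finset (Fin 6) × (Fin 6 → Fin 6))
  refine ⟨8 * K, by positivity, fun T hT r hr => ?_⟩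
  have piece_le (A : Finset (Fin 6)) (w : Fin 6 → Fin 6) (hA : #A = 3) (hw : ∀ i ∈ A, w i ∉ A) :
      volume (partnerSet T r A w) ≤ ENNReal.ofReal (8 * r ^ 3 * T ^ 3) := by
    have hAc : #Aᶜ = 3 := by rw [card_compl, hA, Fintype.card_fin]
    calc _ ≤ ENNReal.ofReal (2 * r) ^ 3 * ENNReal.ofReal T ^ 3 := by
          simpa only [hA, hAc] using volume_partnerSet_le T r hw
      _ = ENNReal.ofReal (8 * r ^ 3 * T ^ 3) := by
          rw [← ENNReal.ofReal_pow (by positivity), ← ENNReal.ofReal_pow hT.le,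
            ← ENNReal.ofReal_mul (by positivity)]
          ring_nf
  refine (measure_mono (subset_iUnion_partnerSet T r)).trans <|
    (measure_iUnion_fintype_le _ _).trans ?_
  calc _ ≤ ∑ _p : {p : Finset (Fin 6) × (Fin 6 → Fin 6) // #p.1 = 3 ∧ ∀ i ∈ p.1, p.2 i ∉ p.1},
          ENNReal.ofReal (8 * r ^ 3 * T ^ 3) := sum_le_sum fun p _ => piece_le _ _ p.2.1 p.2.2
    _ ≤ K • ENNReal.ofReal (8 * r ^ 3 * T ^ 3) := by
          rw [sum_const, card_univ]
          gcongr
          exact Fintype.card_subtype_le _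
    _ = _ := by
          rw [nsmul_eq_mul, ← ENNReal.ofReal_natCast, ← ENNReal.ofReal_mul (by positivity)]
          ring_nf
end
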